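/- arXiv:1311.1412 — 3 statements merged into one kernel-verified Lean document; each statement's English description precedes it below -/
import Mathlib

section
/- Let F : U → ℝ² be a C² diffeomorphism on an open subset U of the Euclidean plane, written (u,v) = F(x,y). If for every C² function φ one has Δφ = 0 in the (x,y)-coordinates if and only if Δ'φ = 0 in the (u,v)-coordinates, then the partial derivatives of u and v satisfy either the Cauchy–Riemann equations u_x = v_y and u_y = -v_x, or the anti-Cauchy–Riemann equations u_x = -v_y and u_y = v_x, at every point of U. -/
/-- Partial derivative in the first coordinate. -/
noncomputable def pdx (φ : ℝ × ℝ → ℝ) (p : ℝ × ℝ) : ℝ :=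
  deriv (fun s => φ (s, p.2)) p.1

/-- Partial derivative in the second coordinate. -/
noncomputable def pdy (φ : ℝ × ℝ → ℝ) (p : ℝ × ℝ) : ℝ :=
  deriv (fun s => φ (p.1, s)) p.2

/-- Euclidean Laplacian ∂²/∂x² + ∂²/∂y². -/
noncomputable def lap (φ : ℝ × ℝ → ℝ) (p : ℝ × ℝ) : ℝ :=
  pdx (pdx φ) p + pdy (pdy φ) p

/-!
For a C² function, `Δ(fg) = g Δf + f Δg + 2 ∇f·∇g`. The product `ℓ₁ ℓ₂` of two linear forms is
harmonic exactly when `ℓ₁ ⊥ ℓ₂`, so pulling back `xy` and `x² - y² = (x + y)(x - y)` along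
`F = (u, v)` and using that `u`, `v` are harmonic shows that `∇u ⊥ ∇v` and `|∇u| = |∇v|`:
`∇v` is `∇u` rotated by `±π/2`.
-/

open Filter Topology

section PartialDerivatives

variable {f g : ℝ × ℝ → ℝ} {q : ℝ × ℝ}

theorem hasDerivAt_pdx (hf : DifferentiableAt ℝ f q) :
    HasDerivAt (fun s => f (s, q.2)) (pdx f q) q.1 :=
  (hf.comp q.1 (differentiableAt_id.prodMk (differentiableAt_const _))).hasDerivAt

theorem pdx_eq_fderiv (hf : DifferentiableAt ℝ f q) : pdx f q = fderiv ℝ f q (1, 0) :=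
  (hf.hasFDerivAt.comp_hasDerivAt q.1
    ((hasDerivAt_id q.1).prodMk (hasDerivAt_const q.1 q.2))).deriv

theorem pdy_eq_fderiv (hf : DifferentiableAt ℝ f q) : pdy f q = fderiv ℝ f q (0, 1) :=
  (hf.hasFDerivAt.comp_hasDerivAt q.2
    ((hasDerivAt_const q.2 q.1).prodMk (hasDerivAt_id q.2))).deriv

theorem pdx_mul (hf : DifferentiableAt ℝ f q) (hg : DifferentiableAt ℝ g q) :
    pdx (fun r => f r * g r) q = pdx f q * g q + f q * pdx g q :=
  ((hasDerivAt_pdx hf).mul (hasDerivAt_pdx hg)).deriv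

theorem Filter.EventuallyEq.pdx_eq (h : f =ᶠ[𝓝 q] g) : pdx f q = pdx g q :=
  EventuallyEq.deriv_eq <|
    (continuous_id.prodMk continuous_const).continuousAt.tendsto.eventually h

theorem ContDiffAt.differentiableAt_pdx (hf : ContDiffAt ℝ 2 f q) :
    DifferentiableAt ℝ (pdx f) q := by
  have hfderiv : DifferentiableAt ℝ (fun r => fderiv ℝ f r (1, 0)) q :=
    ((hf.fderiv_right (m := 1) le_rfl).clm_apply contDiffAt_const).differentiableAt one_ne_zero
  refine hfderiv.congr_of_eventuallyEq ?_
  filter_upwards [hf.eventually (by simp)] with r hr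
  exact pdx_eq_fderiv (hr.differentiableAt two_ne_zero)

theorem pdx_pdx_mul (hf : ContDiffAt ℝ 2 f q) (hg : ContDiffAt ℝ 2 g q) :
    pdx (pdx fun r => f r * g r) q
      = pdx (pdx f) q * g q + 2 * (pdx f q * pdx g q) + f q * pdx (pdx g) q := by
  have hprod : pdx (fun r => f r * g r) =ᶠ[𝓝 q] fun r => pdx f r * g r + f r * pdx g r := by
    filter_upwards [hf.eventually (by simp), hg.eventually (by simp)] with r hfr hgr
    exact pdx_mul (hfr.differentiableAt two_ne_zero) (hgr.differentiableAt two_ne_zero)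
  have hf₁ := hf.differentiableAt two_ne_zero
  have hg₁ := hg.differentiableAt two_ne_zero
  rw [hprod.pdx_eq, pdx, (((hasDerivAt_pdx hf.differentiableAt_pdx).fun_mul
    (hasDerivAt_pdx hg₁)).fun_add ((hasDerivAt_pdx hf₁).fun_mul
    (hasDerivAt_pdx hg.differentiableAt_pdx))).deriv]
  ring

theorem ContDiffAt.comp_swap {n : WithTop ℕ∞} (hf : ContDiffAt ℝ n f q) :
    ContDiffAt ℝ n (f ∘ Prod.swap) q.swap :=
  hf.comp q.swap (contDiff_snd.prodMk contDiff_fst).contDiffAt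

-- `pdy φ q` is definitionally `pdx (φ ∘ Prod.swap) q.swap`.
theorem pdy_pdy_mul (hf : ContDiffAt ℝ 2 f q) (hg : ContDiffAt ℝ 2 g q) :
    pdy (pdy fun r => f r * g r) q
      = pdy (pdy f) q * g q + 2 * (pdy f q * pdy g q) + f q * pdy (pdy g) q :=
  pdx_pdx_mul hf.comp_swap hg.comp_swap

theorem lap_mul (hf : ContDiffAt ℝ 2 f q) (hg : ContDiffAt ℝ 2 g q) :
    lap (fun r => f r * g r) q
      = g q * lap f q + f q * lap g q + 2 * (pdx f q * pdx g q + pdy f q * pdy g q) := by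
  rw [lap, lap, lap, pdx_pdx_mul hf hg, pdy_pdy_mul hf hg]
  ring

end PartialDerivatives

theorem lap_clm (ℓ : ℝ × ℝ →L[ℝ] ℝ) (q : ℝ × ℝ) : lap ℓ q = 0 := by
  have hx : pdx ℓ = fun _ => ℓ (1, 0) :=
    funext fun r => by rw [pdx_eq_fderiv ℓ.differentiableAt, ℓ.fderiv]
  have hy : pdy ℓ = fun _ => ℓ (0, 1) :=
    funext fun r => by rw [pdy_eq_fderiv ℓ.differentiableAt, ℓ.fderiv]
  rw [lap, hx, hy]
  simp [pdx, pdy]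

theorem lap_clm_mul_clm (ℓ₁ ℓ₂ : ℝ × ℝ →L[ℝ] ℝ) (q : ℝ × ℝ) :
    lap (fun r => ℓ₁ r * ℓ₂ r) q = 2 * (ℓ₁ (1, 0) * ℓ₂ (1, 0) + ℓ₁ (0, 1) * ℓ₂ (0, 1)) := by
  rw [lap_mul ℓ₁.contDiff.contDiffAt ℓ₂.contDiff.contDiffAt, lap_clm, lap_clm,
    pdx_eq_fderiv ℓ₁.differentiableAt, pdx_eq_fderiv ℓ₂.differentiableAt,
    pdy_eq_fderiv ℓ₁.differentiableAt, pdy_eq_fderiv ℓ₂.differentiableAt, ℓ₁.fderiv, ℓ₂.fderiv]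
  ring

theorem pdx_clm_comp (ℓ : ℝ × ℝ →L[ℝ] ℝ) {F : ℝ × ℝ → ℝ × ℝ} {q : ℝ × ℝ}
    (hF : DifferentiableAt ℝ F q) : pdx (fun r => ℓ (F r)) q = ℓ (fderiv ℝ F q (1, 0)) := by
  change pdx (ℓ ∘ F) q = _
  rw [pdx_eq_fderiv (ℓ.differentiableAt.comp q hF), fderiv_comp q ℓ.differentiableAt hF, ℓ.fderiv]
  rfl

theorem pdy_clm_comp (ℓ : ℝ × ℝ →L[ℝ] ℝ) {F : ℝ × ℝ → ℝ × ℝ} {q : ℝ × ℝ}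
    (hF : DifferentiableAt ℝ F q) : pdy (fun r => ℓ (F r)) q = ℓ (fderiv ℝ F q (0, 1)) := by
  change pdy (ℓ ∘ F) q = _
  rw [pdy_eq_fderiv (ℓ.differentiableAt.comp q hF), fderiv_comp q ℓ.differentiableAt hF, ℓ.fderiv]
  rfl

theorem orthogonal_comp_fderiv_of_harmonic_pullback {F : ℝ × ℝ → ℝ × ℝ} {p : ℝ × ℝ}
    (hF : ContDiffAt ℝ 2 F p)
    (hharm : ∀ φ : ℝ × ℝ → ℝ, ContDiff ℝ 2 φ → (∀ q, lap φ q = 0) → lap (fun r => φ (F r)) p = 0)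
    {ℓ₁ ℓ₂ : ℝ × ℝ →L[ℝ] ℝ} (h : ℓ₁ (1, 0) * ℓ₂ (1, 0) + ℓ₁ (0, 1) * ℓ₂ (0, 1) = 0) :
    ℓ₁ (fderiv ℝ F p (1, 0)) * ℓ₂ (fderiv ℝ F p (1, 0))
      + ℓ₁ (fderiv ℝ F p (0, 1)) * ℓ₂ (fderiv ℝ F p (0, 1)) = 0 := by
  have hℓF (ℓ : ℝ × ℝ →L[ℝ] ℝ) : ContDiffAt ℝ 2 (fun r => ℓ (F r)) p :=
    ℓ.contDiff.contDiffAt.comp p hF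
  have hF₁ := hF.differentiableAt two_ne_zero
  have hprod := lap_mul (hℓF ℓ₁) (hℓF ℓ₂)
  rw [hharm (fun r => ℓ₁ r * ℓ₂ r) (ℓ₁.contDiff.mul ℓ₂.contDiff)
      (fun q => by rw [lap_clm_mul_clm, h, mul_zero]),
    hharm ℓ₁ ℓ₁.contDiff (lap_clm ℓ₁), hharm ℓ₂ ℓ₂.contDiff (lap_clm ℓ₂),
    pdx_clm_comp ℓ₁ hF₁, pdx_clm_comp ℓ₂ hF₁, pdy_clm_comp ℓ₁ hF₁, pdy_clm_comp ℓ₂ hF₁] at hprod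
  linarith

theorem rotation_cases_of_orthogonal_of_sq_sum_eq {a b c d : ℝ} (horth : a * c + b * d = 0)
    (hnorm : a ^ 2 + b ^ 2 = c ^ 2 + d ^ 2) : (a = d ∧ b = -c) ∨ (a = -d ∧ b = c) := by
  have key : ((a - d) ^ 2 + (b + c) ^ 2) * ((a + d) ^ 2 + (b - c) ^ 2) = 0 := by
    linear_combination (a ^ 2 + b ^ 2 - c ^ 2 - d ^ 2) * hnorm + 4 * (a * c + b * d) * horth
  rcases mul_eq_zero.mp key with h | h
  · left; constructor <;> nlinarith [sq_nonneg (a - d), sq_nonneg (b + c)]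
  · right; constructor <;> nlinarith [sq_nonneg (a + d), sq_nonneg (b - c)]

theorem conformal_characterization_CR_general
    (U : Set (ℝ × ℝ)) (hU : IsOpen U)
    (F : ℝ × ℝ → ℝ × ℝ)
    (hF : ContDiffOn ℝ 2 F U)
    (hHarm : ∀ φ : ℝ × ℝ → ℝ, ContDiff ℝ 2 φ →
      ((∀ p ∈ U, lap (fun q => φ (F q)) p = 0) ↔ (∀ q ∈ F '' U, lap φ q = 0))) :
    ∀ p ∈ U,
      (pdx (fun q => (F q).1) p = pdy (fun q => (F q).2) p ∧
        pdy (fun q => (F q).1) p = - pdx (fun q => (F q).2) p) ∨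
      (pdx (fun q => (F q).1) p = - pdy (fun q => (F q).2) p ∧
        pdy (fun q => (F q).1) p = pdx (fun q => (F q).2) p) := by
  intro p hp
  have hFp : ContDiffAt ℝ 2 F p := hF.contDiffAt (hU.mem_nhds hp)
  have hharm (φ : ℝ × ℝ → ℝ) (hφ : ContDiff ℝ 2 φ) (hφ₀ : ∀ q, lap φ q = 0) :
      lap (fun r => φ (F r)) p = 0 :=
    (hHarm φ hφ).mpr (fun q _ => hφ₀ q) p hp
  have horth := orthogonal_comp_fderiv_of_harmonic_pullback hFp hharm
    (ℓ₁ := .fst ℝ ℝ ℝ) (ℓ₂ := .snd ℝ ℝ ℝ) (by simp)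
  have hnorm := orthogonal_comp_fderiv_of_harmonic_pullback hFp hharm
    (ℓ₁ := .fst ℝ ℝ ℝ + .snd ℝ ℝ ℝ) (ℓ₂ := .fst ℝ ℝ ℝ - .snd ℝ ℝ ℝ) (by simp)
  have hF₁ := hFp.differentiableAt two_ne_zero
  rw [show pdx (fun q => (F q).1) p = (fderiv ℝ F p (1, 0)).1 from pdx_clm_comp (.fst ℝ ℝ ℝ) hF₁,
    show pdy (fun q => (F q).1) p = (fderiv ℝ F p (0, 1)).1 from pdy_clm_comp (.fst ℝ ℝ ℝ) hF₁,
    show pdx (fun q => (F q).2) p = (fderiv ℝ F p (1, 0)).2 from pdx_clm_comp (.snd ℝ ℝ ℝ) hF₁,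
    show pdy (fun q => (F q).2) p = (fderiv ℝ F p (0, 1)).2 from pdy_clm_comp (.snd ℝ ℝ ℝ) hF₁]
  simp only [add_apply, sub_apply,
    ContinuousLinearMap.coe_fst', ContinuousLinearMap.coe_snd'] at horth hnorm
  exact rotation_cases_of_orthogonal_of_sq_sum_eq horth (by linear_combination hnorm)

/-- if a C² diffeomorphism `F = (u,v)` on an open set `U` pulls back
harmonic functions to harmonic functions and conversely, then at every point of `U`
the components satisfy the Cauchy–Riemann or anti-Cauchy–Riemann equations. -/
theorem conformal_characterization_CR
    (U : Set (ℝ × ℝ)) (hU : IsOpen U)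
    (F : ℝ × ℝ → ℝ × ℝ)
    (hF : ContDiffOn ℝ 2 F U)
    (hInj : Set.InjOn F U)
    (hOpen : IsOpen (F '' U))
    (hInv : ∃ G : ℝ × ℝ → ℝ × ℝ, ContDiffOn ℝ 2 G (F '' U) ∧ ∀ p ∈ U, G (F p) = p)
    (hHarm : ∀ φ : ℝ × ℝ → ℝ, ContDiff ℝ 2 φ →
      ((∀ p ∈ U, lap (fun q => φ (F q)) p = 0) ↔ (∀ q ∈ F '' U, lap φ q = 0))) :
    ∀ p ∈ U,
      (pdx (fun q => (F q).1) p = pdy (fun q => (F q).2) p ∧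
        pdy (fun q => (F q).1) p = - pdx (fun q => (F q).2) p) ∨
      (pdx (fun q => (F q).1) p = - pdy (fun q => (F q).2) p ∧
        pdy (fun q => (F q).1) p = pdx (fun q => (F q).2) p) :=
  conformal_characterization_CR_general U hU F hF hHarm
end

section
/- Let F : U → ℝ² be a C² conformal map on an open connected subset U of ℝ² (i.e., the derivative DF(p) at each point is a nonzero scalar multiple of an orthogonal linear map). Then F, viewed as a function of the complex variable z = x + iy, is holomorphic on U or anti-holomorphic on U. -/
open Complex ComplexConjugate

/-! At every point the differential of a conformal map of the plane is complex linear or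
conjugate linear, that is, `DF p I = I * DF p 1` or `DF p I = -I * DF p 1`; as `DF p 1 ≠ 0`,
never both. Because `DF` is continuous, each of the two equations cuts out a relatively closed
subset of `U`, so by connectedness one of them holds on all of `U`: this is the Cauchy–Riemann
equation for `F` or for `conj ∘ F`. -/

theorem IsPreconnected.eqOn_or_eqOn {α β : Type*} [TopologicalSpace α] [TopologicalSpace β]
    [T2Space β] {U : Set α} (hU : IsPreconnected U) {f g₁ g₂ : α → β}
    (hf : ContinuousOn f U) (hg₁ : ContinuousOn g₁ U) (hg₂ : ContinuousOn g₂ U)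
    (hcover : ∀ x ∈ U, f x = g₁ x ∨ f x = g₂ x) (hne : ∀ x ∈ U, g₁ x ≠ g₂ x) :
    Set.EqOn f g₁ U ∨ Set.EqOn f g₂ U := by
  have := isPreconnected_iff_preconnectedSpace.1 hU
  have hclosed {g : α → β} (hg : ContinuousOn g U) :
      IsClosed {x : U | U.domRestrict f x = U.domRestrict g x} :=
    isClosed_eq hf.domRestrict hg.domRestrict
  rcases isPreconnected_iff_subset_of_disjoint_closed.1 isPreconnected_univ _ _
      (hclosed hg₁) (hclosed hg₂) (fun x _ => hcover x x.2)
      (Set.eq_empty_of_forall_notMem fun x ⟨_, h₁, h₂⟩ => hne x x.2 (h₁.symm.trans h₂))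
    with h | h
  · exact .inl fun x hx => h (Set.mem_univ ⟨x, hx⟩)
  · exact .inr fun x hx => h (Set.mem_univ ⟨x, hx⟩)

theorem ContinuousLinearMap.exists_restrictScalars_eq_iff (g : ℂ →L[ℝ] ℂ) :
    (∃ g' : ℂ →L[ℂ] ℂ, g'.restrictScalars ℝ = g) ↔ g I = I * g 1 := by
  constructor
  · rintro ⟨g', rfl⟩
    simpa using g'.map_smul I 1
  · intro h
    refine ⟨g 1 • ContinuousLinearMap.id ℂ ℂ, ?_⟩
    ext z
    have hz : g z = z.re • g 1 + z.im • g I := by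
      conv_lhs => rw [show z = z.re • (1 : ℂ) + z.im • I by simp [real_smul, re_add_im]]
      rw [map_add, map_smul, map_smul]
    simp only [coe_restrictScalars', smul_apply, id_apply, smul_eq_mul, hz, h, real_smul]
    linear_combination (-(g 1)) * re_add_im z

theorem IsConformalMap.apply_I_eq_or {g : ℂ →L[ℝ] ℂ} (h : IsConformalMap g) :
    g I = I * g 1 ∨ g I = -I * g 1 := by
  refine h.is_complex_or_conj_linear.imp (g.exists_restrictScalars_eq_iff).1 fun hconj => ?_
  have := ((g ∘L conjCLE).exists_restrictScalars_eq_iff).1 hconj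
  simp only [ContinuousLinearMap.comp_apply, ContinuousLinearEquiv.coe_coe, conjCLE_apply,
    conj_I, map_one, map_neg] at this
  linear_combination -this

theorem IsConformalMap.I_mul_apply_one_ne {g : ℂ →L[ℝ] ℂ} (h : IsConformalMap g) :
    I * g 1 ≠ -I * g 1 := fun heq => by
  have : g 1 ≠ 0 := (map_ne_zero_iff _ h.injective).2 one_ne_zero
  exact I_ne_zero (by linear_combination mul_right_cancel₀ this heq / 2)

theorem differentiableAt_complex_iff_fderiv_I {f : ℂ → ℂ} {z : ℂ}
    (hf : DifferentiableAt ℝ f z) :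
    DifferentiableAt ℂ f z ↔ fderiv ℝ f z I = I * fderiv ℝ f z 1 := by
  rw [differentiableAt_iff_restrictScalars ℝ hf,
    ContinuousLinearMap.exists_restrictScalars_eq_iff]

theorem differentiableAt_conj_comp_iff_fderiv_I {f : ℂ → ℂ} {z : ℂ}
    (hf : DifferentiableAt ℝ f z) :
    DifferentiableAt ℂ (fun w => conj (f w)) z ↔ fderiv ℝ f z I = -I * fderiv ℝ f z 1 := by
  have hconj :
      HasFDerivAt (fun w => conj (f w)) ((conjCLE : ℂ →L[ℝ] ℂ) ∘L fderiv ℝ f z) z :=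
    conjCLE.hasFDerivAt.comp z hf.hasFDerivAt
  rw [differentiableAt_iff_restrictScalars ℝ hconj.differentiableAt, hconj.fderiv,
    ContinuousLinearMap.exists_restrictScalars_eq_iff]
  simp only [ContinuousLinearMap.comp_apply, ContinuousLinearEquiv.coe_coe, conjCLE_apply]
  rw [show I * conj (fderiv ℝ f z 1) = conj (-I * fderiv ℝ f z 1) by simp,
    (RingHom.injective _).eq_iff]

/-- a C² conformal map on an open connected subset of the plane,
viewed as a complex function, is holomorphic or anti-holomorphic on `U`. -/
theorem conformal_holomorphic_or_antiholomorphic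
    (U : Set ℂ) (hU : IsOpen U) (hconn : IsConnected U)
    (F : ℂ → ℂ)
    (hF : ContDiffOn ℝ 2 F U)
    (hconf : ∀ p ∈ U, IsConformalMap (fderiv ℝ F p)) :
    DifferentiableOn ℂ F U ∨
      DifferentiableOn ℂ (fun z => (starRingEnd ℂ) (F z)) U := by
  have hdiff : ∀ p ∈ U, DifferentiableAt ℝ F p := fun p hp =>
    (hF.contDiffAt (hU.mem_nhds hp)).differentiableAt (by norm_num)
  have happly (v : ℂ) : ContinuousOn (fun p => fderiv ℝ F p v) U :=
    (hF.continuousOn_fderiv_of_isOpen hU (by norm_num)).clm_apply continuousOn_const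
  refine (hconn.isPreconnected.eqOn_or_eqOn (happly I) (continuousOn_const.mul (happly 1))
      (continuousOn_const.mul (happly 1)) (fun p hp => (hconf p hp).apply_I_eq_or)
      (fun p hp => (hconf p hp).I_mul_apply_one_ne)).imp
    (fun h p hp => ?_) (fun h p hp => ?_)
  · exact ((differentiableAt_complex_iff_fderiv_I (hdiff p hp)).2 (h hp)).differentiableWithinAt
  · exact ((differentiableAt_conj_comp_iff_fderiv_I (hdiff p hp)).2 (h hp)).differentiableWithinAt
end

section
/- Let F : U → ℝ²₁ be a C² diffeomorphism on an open subset U of the Minkowski plane with components (X,T), and suppose the pullback of the Minkowski form η = dx² - dt² under F is λ·η with λ > 0 pointwise. Write X = f(x+t) + g(x-t) and T = k(x+t) + h(x-t) (d'Alembert decompositions). Then at corresponding points: f'·g' > 0, k'·h' < 0, f'h' + g'k' = 0, and f'g' + k'h' = 0. -/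
/-!
Along the null directions `e₊ = (1/2, 1/2)` and `e₋ = (1/2, -1/2)` the differential of `F` is
`DF e₊ = (f', k')` and `DF e₋ = (g', h')`. Conformality makes both images null, i.e.
`f'² = k'²` and `g'² = h'²`, and gives `f'g' - k'h' = η(DF e₊, DF e₋) = λ/2 > 0`.
Then `(f'g')² = (k'h')²` forces `f'g' + k'h' = 0`, and `(f'h' + g'k')² = 2 f'g' (f'g' + k'h') = 0`.
-/

/-- The Minkowski bilinear form on ℝ². -/
def minkEta (a b : ℝ × ℝ) : ℝ := a.1 * b.1 - a.2 * b.2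

open ContinuousLinearMap

lemma mul_relations_of_sq_eq_of_sub_pos {a b c d : ℝ} (hac : a ^ 2 = c ^ 2)
    (hbd : b ^ 2 = d ^ 2) (hpos : 0 < a * b - c * d) :
    0 < a * b ∧ c * d < 0 ∧ a * d + b * c = 0 ∧ a * b + c * d = 0 := by
  have hsum : a * b + c * d = 0 := by
    have hprod : (a * b + c * d) * (a * b - c * d) = 0 := by
      linear_combination b ^ 2 * hac + c ^ 2 * hbd
    exact (mul_eq_zero.1 hprod).resolve_right hpos.ne'
  have hcross : (a * d + b * c) ^ 2 = 0 := by
    linear_combination (2 * a * b) * hsum - a ^ 2 * hbd - b ^ 2 * hac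
  exact ⟨by linarith, by linarith, pow_eq_zero_iff two_ne_zero |>.1 hcross, hsum⟩

lemma mul_relations_of_conformal {L : ℝ × ℝ →L[ℝ] ℝ × ℝ} {lam a b c d : ℝ} (hlam : 0 < lam)
    (hL : ∀ w₁ w₂, minkEta (L w₁) (L w₂) = lam * minkEta w₁ w₂)
    (hplus : L (1 / 2, 1 / 2) = (a, c)) (hminus : L (1 / 2, -1 / 2) = (b, d)) :
    0 < a * b ∧ c * d < 0 ∧ a * d + b * c = 0 ∧ a * b + c * d = 0 := by
  have hnull_plus := hL (1 / 2, 1 / 2) (1 / 2, 1 / 2)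
  have hnull_minus := hL (1 / 2, -1 / 2) (1 / 2, -1 / 2)
  have hcross := hL (1 / 2, 1 / 2) (1 / 2, -1 / 2)
  simp only [hplus, hminus, minkEta] at hnull_plus hnull_minus hcross
  exact mul_relations_of_sq_eq_of_sub_pos (by linear_combination hnull_plus)
    (by linear_combination hnull_minus) (by linarith)

section DAlembert

variable {a b : ℝ}

lemma HasDerivAt.hasFDerivAt_comp_add_add_comp_sub {f g : ℝ → ℝ} {p : ℝ × ℝ}
    (hf : HasDerivAt f a (p.1 + p.2)) (hg : HasDerivAt g b (p.1 - p.2)) :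
    HasFDerivAt (fun q : ℝ × ℝ => f (q.1 + q.2) + g (q.1 - q.2))
      (a • (fst ℝ ℝ ℝ + snd ℝ ℝ ℝ) + b • (fst ℝ ℝ ℝ - snd ℝ ℝ ℝ)) p :=
  (hf.comp_hasFDerivAt p (hasFDerivAt_fst.add hasFDerivAt_snd)).add
    (hg.comp_hasFDerivAt p (hasFDerivAt_fst.sub hasFDerivAt_snd))

lemma dAlembert_apply_plus :
    (a • (fst ℝ ℝ ℝ + snd ℝ ℝ ℝ) + b • (fst ℝ ℝ ℝ - snd ℝ ℝ ℝ)) (1 / 2, 1 / 2) = a := by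
  simp only [add_apply, smul_apply, sub_apply, coe_fst', coe_snd', smul_eq_mul]
  ring

lemma dAlembert_apply_minus :
    (a • (fst ℝ ℝ ℝ + snd ℝ ℝ ℝ) + b • (fst ℝ ℝ ℝ - snd ℝ ℝ ℝ)) (1 / 2, -1 / 2) = b := by
  simp only [add_apply, smul_apply, sub_apply, coe_fst', coe_snd', smul_eq_mul]
  ring

end DAlembert

lemma fderiv_apply_null_of_eqOn_dAlembert {U : Set (ℝ × ℝ)} (hU : IsOpen U)
    {F : ℝ × ℝ → ℝ × ℝ} {f g k h : ℝ → ℝ} {p : ℝ × ℝ} (hp : p ∈ U)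
    (hf : DifferentiableAt ℝ f (p.1 + p.2)) (hg : DifferentiableAt ℝ g (p.1 - p.2))
    (hk : DifferentiableAt ℝ k (p.1 + p.2)) (hh : DifferentiableAt ℝ h (p.1 - p.2))
    (hX : ∀ q ∈ U, (F q).1 = f (q.1 + q.2) + g (q.1 - q.2))
    (hT : ∀ q ∈ U, (F q).2 = k (q.1 + q.2) + h (q.1 - q.2)) :
    fderiv ℝ F p (1 / 2, 1 / 2) = (deriv f (p.1 + p.2), deriv k (p.1 + p.2)) ∧
      fderiv ℝ F p (1 / 2, -1 / 2) = (deriv g (p.1 - p.2), deriv h (p.1 - p.2)) := by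
  have hF : F =ᶠ[nhds p]
      fun q => (f (q.1 + q.2) + g (q.1 - q.2), k (q.1 + q.2) + h (q.1 - q.2)) := by
    filter_upwards [hU.mem_nhds hp] with q hq
    exact Prod.ext (hX q hq) (hT q hq)
  have hDF := ((hf.hasDerivAt.hasFDerivAt_comp_add_add_comp_sub hg.hasDerivAt).prodMk
    (hk.hasDerivAt.hasFDerivAt_comp_add_add_comp_sub hh.hasDerivAt)).congr_of_eventuallyEq hF
  simp only [hDF.fderiv, prod_apply, dAlembert_apply_plus, dAlembert_apply_minus, and_self]

theorem conformal_null_derivative_relations_general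
    (U : Set (ℝ × ℝ)) (hU : IsOpen U)
    (F : ℝ × ℝ → ℝ × ℝ)
    (lam : ℝ × ℝ → ℝ) (hlam : ∀ p ∈ U, 0 < lam p)
    (hconf : ∀ p ∈ U, ∀ w₁ w₂ : ℝ × ℝ,
      minkEta (fderiv ℝ F p w₁) (fderiv ℝ F p w₂) = lam p * minkEta w₁ w₂)
    (f g k h : ℝ → ℝ)
    (hf : ContDiff ℝ 2 f) (hg : ContDiff ℝ 2 g)
    (hk : ContDiff ℝ 2 k) (hh : ContDiff ℝ 2 h)
    (hX : ∀ p ∈ U, (F p).1 = f (p.1 + p.2) + g (p.1 - p.2))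
    (hT : ∀ p ∈ U, (F p).2 = k (p.1 + p.2) + h (p.1 - p.2)) :
    ∀ p ∈ U,
      0 < deriv f (p.1 + p.2) * deriv g (p.1 - p.2) ∧
      deriv k (p.1 + p.2) * deriv h (p.1 - p.2) < 0 ∧
      deriv f (p.1 + p.2) * deriv h (p.1 - p.2)
        + deriv g (p.1 - p.2) * deriv k (p.1 + p.2) = 0 ∧
      deriv f (p.1 + p.2) * deriv g (p.1 - p.2)
        + deriv k (p.1 + p.2) * deriv h (p.1 - p.2) = 0 := by
  intro p hp
  obtain ⟨hplus, hminus⟩ := fderiv_apply_null_of_eqOn_dAlembert hU hp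
    (hf.differentiable two_ne_zero _) (hg.differentiable two_ne_zero _)
    (hk.differentiable two_ne_zero _) (hh.differentiable two_ne_zero _) hX hT
  exact mul_relations_of_conformal (hlam p hp) (hconf p hp) hplus hminus

/-- for a Minkowski-conformal C² diffeomorphism F = (X,T) with
d'Alembert decompositions X = f(x+t) + g(x-t), T = k(x+t) + h(x-t), at the
corresponding points one has f'g' > 0, k'h' < 0, f'h' + g'k' = 0 and
f'g' + k'h' = 0. -/
theorem conformal_null_derivative_relations
    (U : Set (ℝ × ℝ)) (hU : IsOpen U)
    (F : ℝ × ℝ → ℝ × ℝ)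
    (hF : ContDiffOn ℝ 2 F U)
    (hInj : Set.InjOn F U)
    (hOpen : IsOpen (F '' U))
    (hInv : ∃ G : ℝ × ℝ → ℝ × ℝ, ContDiffOn ℝ 2 G (F '' U) ∧ ∀ p ∈ U, G (F p) = p)
    (lam : ℝ × ℝ → ℝ) (hlam : ∀ p ∈ U, 0 < lam p)
    (hconf : ∀ p ∈ U, ∀ w₁ w₂ : ℝ × ℝ,
      minkEta (fderiv ℝ F p w₁) (fderiv ℝ F p w₂) = lam p * minkEta w₁ w₂)
    (f g k h : ℝ → ℝ)
    (hf : ContDiff ℝ 2 f) (hg : ContDiff ℝ 2 g)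
    (hk : ContDiff ℝ 2 k) (hh : ContDiff ℝ 2 h)
    (hX : ∀ p ∈ U, (F p).1 = f (p.1 + p.2) + g (p.1 - p.2))
    (hT : ∀ p ∈ U, (F p).2 = k (p.1 + p.2) + h (p.1 - p.2)) :
    ∀ p ∈ U,
      0 < deriv f (p.1 + p.2) * deriv g (p.1 - p.2) ∧
      deriv k (p.1 + p.2) * deriv h (p.1 - p.2) < 0 ∧
      deriv f (p.1 + p.2) * deriv h (p.1 - p.2)
        + deriv g (p.1 - p.2) * deriv k (p.1 + p.2) = 0 ∧
      deriv f (p.1 + p.2) * deriv g (p.1 - p.2)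
        + deriv k (p.1 + p.2) * deriv h (p.1 - p.2) = 0 :=
  conformal_null_derivative_relations_general U hU F lam hlam hconf f g k h hf hg hk hh hX hT
end
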